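/- Let X be the l²-sum of the spaces E_n = (ℝ², ‖·‖_n) for n ≥ 2, where ‖(x,y)‖_n = (|x|^n + |y|^n)^{1/n}, with norm ‖{x_n}‖ = (Σ_{n≥2} ‖x_n‖_n²)^{1/2}. Let B = {x ∈ X : ‖x‖ ≥ 2}. Then the ordered pair (B_X, B) does not satisfy the UC property: with x_n, z_n ∈ B_X being the sequences supported in the n-th coordinate equal to (2^{−1/(n+1)}, 2^{−1/(n+1)}) and (2^{−1/(n+1)}, −2^{−1/(n+1)}) respectively, and y_n supported in the n-th coordinate equal to (2, 0), one has lim ‖x_n − y_n‖ = lim ‖z_n − y_n‖ = 1 = dist(B_X, B), while ‖x_n − z_n‖ = 2·2^{−1/(n+1)} → 2 ≠ 0. -/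

import Mathlib

open Filter Topology
open scoped ENNReal

noncomputable section

/-- `E n` is `ℝ²` with the `‖(x,y)‖ = (|x|^(n+2) + |y|^(n+2))^(1/(n+2))` norm
(we index so that the exponent is `n + 2 ≥ 2`). -/
abbrev Espace (n : ℕ) := PiLp ((n : ℝ≥0∞) + 2) (fun _ : Fin 2 => ℝ)

instance (n : ℕ) : Fact (1 ≤ ((n : ℝ≥0∞) + 2)) :=
  ⟨by
    calc (1 : ℝ≥0∞) ≤ 2 := one_le_two
    _ ≤ (n : ℝ≥0∞) + 2 := le_add_self⟩

/-- The `ℓ²`-sum `X = (Σ ⊕ E_n)_{ℓ²}`. -/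
abbrev Xspace := lp Espace 2

/-- The vector of `ℝ²` with both coordinates equal to `c`, viewed in `E n`. -/
def vec2 (n : ℕ) (c c' : ℝ) : Espace n := (WithLp.equiv _ _).symm ![c, c']

/-- `dist(A,B) = inf{‖a−b‖ : a ∈ A, b ∈ B}`. -/
def SetDist {X : Type*} [MetricSpace X] (A B : Set X) : ℝ :=
  sInf (Set.image2 dist A B)

/-- The ordered pair (A,B) satisfies the UC property. -/
def UCprop {X : Type*} [MetricSpace X] (A B : Set X) : Prop :=
  ∀ (x z : ℕ → X) (y : ℕ → X), (∀ n, x n ∈ A) → (∀ n, z n ∈ A) → (∀ n, y n ∈ B) →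
    Tendsto (fun n => dist (x n) (y n)) atTop (𝓝 (SetDist A B)) →
    Tendsto (fun n => dist (z n) (y n)) atTop (𝓝 (SetDist A B)) →
    Tendsto (fun n => dist (x n) (z n)) atTop (𝓝 0)

/-- `x_n`: supported in coordinate `n`, equal there to `(2^{-1/(n+2)}, 2^{-1/(n+2)})`. -/
def xseq (n : ℕ) : Xspace :=
  lp.single 2 n (vec2 n ((2 : ℝ) ^ (-(1 : ℝ) / (n + 2))) ((2 : ℝ) ^ (-(1 : ℝ) / (n + 2))))

/-- `z_n`: supported in coordinate `n`, equal there to `(2^{-1/(n+2)}, -2^{-1/(n+2)})`. -/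
def zseq (n : ℕ) : Xspace :=
  lp.single 2 n (vec2 n ((2 : ℝ) ^ (-(1 : ℝ) / (n + 2))) (-((2 : ℝ) ^ (-(1 : ℝ) / (n + 2)))))

/-- `y_n`: supported in coordinate `n`, equal there to `(2, 0)`. -/
def yseq (n : ℕ) : Xspace := lp.single 2 n (vec2 n 2 0)

lemma toReal_np2 (n : ℕ) : ((n : ℝ≥0∞) + 2).toReal = (n : ℝ) + 2 := by
  rw [ENNReal.toReal_add (by simp) (by simp)]; simp

lemma Xnorm_single (n : ℕ) (v : Espace n) : ‖(lp.single 2 n v : Xspace)‖ = ‖v‖ := by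
  have h := lp.norm_single (p := 2) (E := Espace) (by norm_num) n v
  simpa using h

lemma single_sub (n : ℕ) (a b : Espace n) :
    (lp.single 2 n a : Xspace) - lp.single 2 n b = lp.single 2 n (a - b) := by
  refine lp.ext (funext fun j => ?_)
  by_cases h : j = n
  · subst h
    simp [lp.coeFn_sub, lp.single_apply_self]
  · simp [lp.coeFn_sub, lp.single_apply_ne _ _ _ h]

lemma vec2_sub (n : ℕ) (a b c d : ℝ) : vec2 n a b - vec2 n c d = vec2 n (a - c) (b - d) := by
  ext i
  fin_cases i <;> simp [vec2]

lemma norm_vec2 (n : ℕ) (a b : ℝ) :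
    ‖vec2 n a b‖ = (|a| ^ ((n:ℝ) + 2) + |b| ^ ((n:ℝ) + 2)) ^ (1 / ((n:ℝ) + 2)) := by
  rw [PiLp.norm_eq_sum (by rw [toReal_np2]; positivity), toReal_np2]
  congr 1
  rw [Fin.sum_univ_two]
  simp [vec2, Real.norm_eq_abs]

/-- abbreviation for the scalar -/
def cc (n : ℕ) : ℝ := (2 : ℝ) ^ (-(1 : ℝ) / (n + 2))

lemma cc_pos (n : ℕ) : 0 < cc n := Real.rpow_pos_of_pos two_pos _

lemma cc_le_one (n : ℕ) : cc n ≤ 1 :=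
  Real.rpow_le_one_of_one_le_of_nonpos one_le_two
    (div_nonpos_of_nonpos_of_nonneg (by norm_num) (by positivity))

lemma cc_rpow (n : ℕ) : cc n ^ ((n:ℝ) + 2) = 1 / 2 := by
  rw [cc, ← Real.rpow_mul (by norm_num)]
  rw [div_mul_cancel₀ _ (by positivity : ((n:ℝ) + 2) ≠ 0)]
  rw [show (-1 : ℝ) = (-1 : ℤ) by norm_num, Real.rpow_intCast]
  norm_num

lemma norm_xseq (n : ℕ) : ‖xseq n‖ = 1 := by
  rw [xseq, Xnorm_single, norm_vec2]
  rw [show (2:ℝ) ^ (-(1:ℝ)/(n+2)) = cc n from rfl]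
  rw [abs_of_pos (cc_pos n), cc_rpow]
  norm_num

lemma norm_yseq (n : ℕ) : ‖yseq n‖ = 2 := by
  rw [yseq, Xnorm_single, norm_vec2]
  have hm : (0:ℝ) < (n:ℝ) + 2 := by positivity
  rw [abs_of_nonneg (by norm_num : (0:ℝ) ≤ 2), abs_zero, Real.zero_rpow hm.ne', add_zero,
    ← Real.rpow_mul (by norm_num), mul_one_div_cancel hm.ne', Real.rpow_one]

lemma norm_x_sub_y (n : ℕ) :
    ‖xseq n - yseq n‖ = ((2 - cc n) ^ ((n:ℝ) + 2) + 1/2) ^ (1 / ((n:ℝ) + 2)) := by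
  rw [xseq, yseq, single_sub, vec2_sub, Xnorm_single, norm_vec2]
  rw [show (2:ℝ) ^ (-(1:ℝ)/(n+2)) = cc n from rfl]
  rw [abs_of_nonpos (by linarith [cc_le_one n] : cc n - 2 ≤ 0), sub_zero,
    abs_of_pos (cc_pos n), cc_rpow, neg_sub]

lemma norm_z_sub_y (n : ℕ) :
    ‖zseq n - yseq n‖ = ((2 - cc n) ^ ((n:ℝ) + 2) + 1/2) ^ (1 / ((n:ℝ) + 2)) := by
  rw [zseq, yseq, single_sub, vec2_sub, Xnorm_single, norm_vec2]
  rw [show (2:ℝ) ^ (-(1:ℝ)/(n+2)) = cc n from rfl]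
  rw [abs_of_nonpos (by linarith [cc_le_one n] : cc n - 2 ≤ 0), sub_zero, abs_neg,
    abs_of_pos (cc_pos n), cc_rpow, neg_sub]

lemma norm_x_sub_z (n : ℕ) : ‖xseq n - zseq n‖ = 2 * cc n := by
  rw [xseq, zseq, single_sub, vec2_sub, Xnorm_single, norm_vec2]
  rw [show (2:ℝ) ^ (-(1:ℝ)/(n+2)) = cc n from rfl]
  have hm : (0:ℝ) < (n:ℝ) + 2 := by positivity
  have h2c : (0:ℝ) < 2 * cc n := by linarith [cc_pos n]
  rw [sub_self, sub_neg_eq_add, abs_zero, Real.zero_rpow hm.ne', zero_add,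
    show cc n + cc n = 2 * cc n by ring, abs_of_pos h2c,
    ← Real.rpow_mul h2c.le, mul_one_div_cancel hm.ne', Real.rpow_one]

lemma key_bound (n : ℕ) : (2 - cc n) ^ ((n:ℝ) + 2) ≤ 2 := by
  set m := (n:ℝ) + 2 with hm'
  have hm : (0:ℝ) < m := by positivity
  set d := (2:ℝ) ^ (1/m) with hd
  have hd0 : (0:ℝ) < d := Real.rpow_pos_of_pos two_pos _
  have hcd : cc n = 1/d := by
    rw [cc, show -(1:ℝ)/(n+2) = -(1/m) by rw [hm']; ring, Real.rpow_neg (by norm_num), hd]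
    exact (one_div _).symm
  have h2 : 2 - cc n ≤ d := by
    rw [hcd]
    have hdd : d * (1/d) = 1 := by field_simp
    nlinarith [sq_nonneg (d - 1)]
  have h0 : (0:ℝ) ≤ 2 - cc n := by linarith [cc_le_one n]
  calc (2 - cc n) ^ m ≤ d ^ m := Real.rpow_le_rpow h0 h2 hm.le
  _ = 2 := by
    rw [hd, ← Real.rpow_mul (by norm_num), one_div_mul_cancel hm.ne', Real.rpow_one]

lemma tendsto_exp0 : Tendsto (fun n : ℕ => 1 / ((n:ℝ) + 2)) atTop (𝓝 0) := by
  have h1 : Tendsto (fun n : ℕ => ((n:ℝ) + 2)) atTop atTop :=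
    tendsto_atTop_add_const_right _ _ tendsto_natCast_atTop_atTop
  simpa [one_div, Pi.inv_def] using h1.inv_tendsto_atTop

lemma tendsto_cc : Tendsto (fun n : ℕ => cc n) atTop (𝓝 1) := by
  have hexp : Tendsto (fun n : ℕ => -(1:ℝ) / ((n:ℝ) + 2)) atTop (𝓝 0) := by
    have := tendsto_exp0.neg
    simpa [neg_div] using this
  have := (tendsto_const_nhds (x := (2:ℝ)) (f := atTop)).rpow hexp (Or.inl (by norm_num))
  simpa [cc] using this

lemma tendsto_xy : Tendsto (fun n => ‖xseq n - yseq n‖) atTop (𝓝 1) := by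
  have hub : Tendsto (fun n : ℕ => ((5:ℝ)/2) ^ (1/((n:ℝ)+2))) atTop (𝓝 1) := by
    have := (tendsto_const_nhds (x := (5:ℝ)/2) (f := atTop)).rpow tendsto_exp0
      (Or.inl (by norm_num))
    simpa using this
  refine tendsto_of_tendsto_of_tendsto_of_le_of_le (tendsto_const_nhds (x := (1:ℝ)))
    hub (fun n => ?_) (fun n => ?_)
  · have h1 : ‖yseq n‖ - ‖xseq n‖ ≤ ‖xseq n - yseq n‖ := by
      rw [norm_sub_rev]; exact norm_sub_norm_le _ _
    rw [norm_xseq, norm_yseq] at h1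
    linarith
  · rw [norm_x_sub_y]
    have h0 : (0:ℝ) ≤ 2 - cc n := by linarith [cc_le_one n]
    have h1 : (0:ℝ) ≤ (2 - cc n) ^ ((n:ℝ) + 2) := Real.rpow_nonneg h0 _
    refine Real.rpow_le_rpow (by linarith) ?_ (by positivity)
    linarith [key_bound n]

lemma tendsto_zy : Tendsto (fun n => ‖zseq n - yseq n‖) atTop (𝓝 1) := by
  have : (fun n => ‖zseq n - yseq n‖) = fun n => ‖xseq n - yseq n‖ := by
    funext n; rw [norm_x_sub_y, norm_z_sub_y]
  rw [this]; exact tendsto_xy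

lemma tendsto_xz : Tendsto (fun n => ‖xseq n - zseq n‖) atTop (𝓝 2) := by
  have := tendsto_cc.const_mul (2:ℝ)
  simp only [mul_one] at this
  exact this.congr fun n => (norm_x_sub_z n).symm

theorem stmt19 :
    let BX : Set Xspace := Metric.closedBall 0 1
    let B : Set Xspace := {x | 2 ≤ ‖x‖}
    SetDist BX B = 1 ∧
    (∀ n, xseq n ∈ BX) ∧ (∀ n, zseq n ∈ BX) ∧ (∀ n, yseq n ∈ B) ∧
    Tendsto (fun n => ‖xseq n - yseq n‖) atTop (𝓝 1) ∧
    Tendsto (fun n => ‖zseq n - yseq n‖) atTop (𝓝 1) ∧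
    (∀ n, ‖xseq n - zseq n‖ = 2 * (2 : ℝ) ^ (-(1 : ℝ) / (n + 2))) ∧
    Tendsto (fun n => ‖xseq n - zseq n‖) atTop (𝓝 2) ∧
    ¬ UCprop BX B := by
  intro BX B
  have hxmem : ∀ n, xseq n ∈ BX := fun n =>
    mem_closedBall_zero_iff.mpr (le_of_eq (norm_xseq n))
  have hzmem : ∀ n, zseq n ∈ BX := by
    intro n
    refine mem_closedBall_zero_iff.mpr (le_of_eq ?_)
    rw [zseq, Xnorm_single, norm_vec2]
    rw [show (2:ℝ) ^ (-(1:ℝ)/(n+2)) = cc n from rfl]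
    rw [abs_neg, abs_of_pos (cc_pos n), cc_rpow]
    norm_num
  have hymem : ∀ n, yseq n ∈ B := fun n => le_of_eq (norm_yseq n).symm
  -- the simple pair realizing distance 1
  set a0 : Xspace := (2:ℝ)⁻¹ • yseq 0 with ha0
  have hy0 : ‖yseq 0‖ = 2 := norm_yseq 0
  have ha0n : ‖a0‖ = 1 := by rw [ha0, norm_smul, hy0]; norm_num
  have ha0mem : a0 ∈ BX := mem_closedBall_zero_iff.mpr (le_of_eq ha0n)
  have hab : dist a0 (yseq 0) = 1 := by
    rw [dist_eq_norm, ha0]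
    have : (2:ℝ)⁻¹ • yseq 0 - yseq 0 = (-(2:ℝ)⁻¹) • yseq 0 := by
      nth_rewrite 2 [← one_smul ℝ (yseq 0)]
      rw [← sub_smul]; norm_num
    rw [this, norm_smul, hy0]
    norm_num
  have hbdd : BddBelow (Set.image2 dist BX B) := ⟨0, by
    rintro d ⟨a, _, b, _, rfl⟩; exact dist_nonneg⟩
  have hdist : SetDist BX B = 1 := by
    refine le_antisymm ?_ ?_
    · calc sInf (Set.image2 dist BX B) ≤ dist a0 (yseq 0) :=
        csInf_le hbdd (Set.mem_image2_of_mem ha0mem (hymem 0))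
      _ = 1 := hab
    · refine le_csInf ⟨_, Set.mem_image2_of_mem ha0mem (hymem 0)⟩ ?_
      rintro d ⟨a, ha, b, hb, rfl⟩
      rw [dist_eq_norm]
      have h1 : ‖a‖ ≤ 1 := mem_closedBall_zero_iff.mp ha
      have h2 : (2:ℝ) ≤ ‖b‖ := hb
      have h3 : ‖b‖ - ‖a‖ ≤ ‖a - b‖ := by
        rw [norm_sub_rev]; exact norm_sub_norm_le _ _
      linarith
  refine ⟨hdist, hxmem, hzmem, hymem, tendsto_xy, tendsto_zy, norm_x_sub_z, tendsto_xz, ?_⟩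
  intro hUC
  have h2 := hUC xseq zseq yseq hxmem hzmem hymem
    (by simpa [dist_eq_norm, hdist] using tendsto_xy)
    (by simpa [dist_eq_norm, hdist] using tendsto_zy)
  simp only [dist_eq_norm] at h2
  have := tendsto_nhds_unique tendsto_xz h2
  norm_num at this


end
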